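/- arXiv:1912.10619 — 2 statements merged into one kernel-verified Lean document; each statement's English description precedes it below -/
import Mathlib

section
/- Suppose a finite set of n flows, where flow i has remaining load l_i ∈ ℕ (number of unit-length packets) and remaining deadline d_i ∈ ℕ (number of remaining slots), is to be scheduled on c ≥ 1 identical channels. If there exists any feasible schedule (i.e., an assignment to each slot t ∈ {1,…,max_i d_i} of a set of at most c flows, with each flow assigned to at most one channel per slot, such that every flow i is assigned in at least l_i of the slots 1,…,d_i), then every Least-Laxity-First schedule — a schedule that in each slot t serves min(c, number of incomplete flows) incomplete flows whose laxity (d_i − (t−1)) − (remaining load of i at slot t) is smallest, with ties broken arbitrarily — also completes every flow i within its deadline d_i. -/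
/-!
Flows `i : Fin n` with load `l i` (unit packets) and deadline `d i` (slot index)
are scheduled on `c` identical channels.  A schedule assigns to each slot
`t = 1, 2, …` a finite set of flows (each flow uses at most one channel per
slot, hence a `Finset`), of cardinality at most `c`.
-/

/-- Remaining load of flow `i` at the beginning of slot `t`: the initial load
minus the number of slots among `1, …, t-1` in which `i` was served. -/
def remLoad {n : ℕ} (l : Fin n → ℕ) (S : ℕ → Finset (Fin n)) (i : Fin n) (t : ℕ) : ℕ :=
  l i - ((Finset.Ico 1 t).filter (fun s => i ∈ S s)).card

/-- Laxity of flow `i` at slot `t`: `(d i − (t − 1))` minus its remaining load. -/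
def laxity {n : ℕ} (l d : Fin n → ℕ) (S : ℕ → Finset (Fin n)) (i : Fin n) (t : ℕ) : ℤ :=
  ((d i : ℤ) - ((t : ℤ) - 1)) - (remLoad l S i t : ℤ)

/-- A schedule on `c` channels serves at most `c` flows in each slot. -/
def IsSchedule {n : ℕ} (c : ℕ) (S : ℕ → Finset (Fin n)) : Prop :=
  ∀ t : ℕ, (S t).card ≤ c

/-- A schedule completes flow `i` if `i` is served in at least `l i` of the
slots `1, …, d i` (i.e. within its deadline). -/
def Completes {n : ℕ} (l d : Fin n → ℕ) (S : ℕ → Finset (Fin n)) (i : Fin n) : Prop :=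
  l i ≤ ((Finset.Icc 1 (d i)).filter (fun t => i ∈ S t)).card

/-- A Least-Laxity-First schedule: in each slot `t ≥ 1` it serves exactly
`min c (number of incomplete flows)` flows, all of which are incomplete
(positive remaining load), and every served flow has laxity no larger than any
incomplete flow that is not served (ties broken arbitrarily). -/
def IsLLF {n : ℕ} (c : ℕ) (l d : Fin n → ℕ) (S : ℕ → Finset (Fin n)) : Prop :=
  ∀ t : ℕ, 1 ≤ t →
    (S t).card = min c (Finset.univ.filter (fun i => 0 < remLoad l S i t)).card ∧
    (∀ i ∈ S t, 0 < remLoad l S i t) ∧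
    (∀ i ∈ S t, ∀ j : Fin n, 0 < remLoad l S j t → j ∉ S t →
      laxity l d S i t ≤ laxity l d S j t)

lemma remLoad_succ {n : ℕ} (l : Fin n → ℕ) (S : ℕ → Finset (Fin n)) (i : Fin n) (t : ℕ)
    (ht : 1 ≤ t) :
    remLoad l S i (t+1) = remLoad l S i t - (if i ∈ S t then 1 else 0) := by
  unfold remLoad
  have h : Finset.Ico 1 (t+1) = Finset.Ico 1 t ∪ {t} := by
    ext x; simp [Finset.mem_Ico]; omega
  have hdisj : Disjoint ((Finset.Ico 1 t).filter (fun s => i ∈ S s))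
      (({t} : Finset ℕ).filter (fun s => i ∈ S s)) := by
    apply Finset.disjoint_filter_filter
    simp [Finset.disjoint_left, Finset.mem_Ico]; omega
  rw [h, Finset.filter_union, Finset.card_union_of_disjoint hdisj, Finset.filter_singleton]
  by_cases hi : i ∈ S t <;> simp [hi] <;> omega

/-- **LLF optimality (Dertouzos–Mok).**  If some schedule on `c ≥ 1` channels
completes every flow within its deadline, then every Least-Laxity-First
schedule also completes every flow within its deadline. -/
theorem llf_optimal {n : ℕ} (c : ℕ) (hc : 1 ≤ c) (l d : Fin n → ℕ)
    (hfeas : ∃ S : ℕ → Finset (Fin n), IsSchedule c S ∧ ∀ i, Completes l d S i)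
    (S' : ℕ → Finset (Fin n)) (hS' : IsLLF c l d S') :
    ∀ i, Completes l d S' i := by
  classical
  obtain ⟨T, hT, hTc⟩ := hfeas
  -- every flow has load at most its deadline
  have hld : ∀ i, l i ≤ d i := by
    intro i
    have h1 : l i ≤ ((Finset.Icc 1 (d i)).filter (fun t => i ∈ T t)).card := hTc i
    have h2 : ((Finset.Icc 1 (d i)).filter (fun t => i ∈ T t)).card ≤ (Finset.Icc 1 (d i)).card :=
      Finset.card_filter_le _ _
    have h3 : (Finset.Icc 1 (d i)).card = d i := by rw [Nat.card_Icc]; omega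
    omega
  -- pointwise mandatory-work bound from the feasible schedule
  have hcount : ∀ (i : Fin n) (s : ℕ),
      l i - (d i - s) ≤ ((Finset.Icc 1 s).filter (fun t => i ∈ T t)).card := by
    intro i s
    have h1 : l i ≤ ((Finset.Icc 1 (d i)).filter (fun t => i ∈ T t)).card := hTc i
    rcases le_or_gt (d i) s with h | h
    · have h2 : ((Finset.Icc 1 (d i)).filter (fun t => i ∈ T t)).card
          ≤ ((Finset.Icc 1 s).filter (fun t => i ∈ T t)).card :=
        Finset.card_le_card (Finset.filter_subset_filter _ (Finset.Icc_subset_Icc_right h))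
      omega
    · rcases Nat.eq_zero_or_pos s with rfl | hs
      · have := hld i; omega
      · have hun : Finset.Icc 1 (d i) = Finset.Icc 1 s ∪ Finset.Ioc s (d i) := by
          ext x
          simp only [Finset.mem_Icc, Finset.mem_union, Finset.mem_Ioc]
          omega
        have h2 : ((Finset.Icc 1 (d i)).filter (fun t => i ∈ T t)).card
            ≤ ((Finset.Icc 1 s).filter (fun t => i ∈ T t)).card + (d i - s) := by
          rw [hun, Finset.filter_union]
          calc ((((Finset.Icc 1 s).filter (fun t => i ∈ T t)) ∪
                ((Finset.Ioc s (d i)).filter (fun t => i ∈ T t))).card)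
              ≤ ((Finset.Icc 1 s).filter (fun t => i ∈ T t)).card
                + ((Finset.Ioc s (d i)).filter (fun t => i ∈ T t)).card :=
                Finset.card_union_le _ _
            _ ≤ ((Finset.Icc 1 s).filter (fun t => i ∈ T t)).card
                + (Finset.Ioc s (d i)).card :=
                Nat.add_le_add_left (Finset.card_filter_le _ _) _
            _ = ((Finset.Icc 1 s).filter (fun t => i ∈ T t)).card + (d i - s) := by
                rw [Nat.card_Ioc]
        omega
  -- aggregate mandatory-work bound
  have hfb : ∀ s : ℕ, (∑ i, (l i - (d i - s))) ≤ c * s := by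
    intro s
    have h2 : (∑ i, ((Finset.Icc 1 s).filter (fun t => i ∈ T t)).card)
        = ∑ t ∈ Finset.Icc 1 s, (T t).card := by
      simp only [Finset.card_filter]
      rw [Finset.sum_comm]
      refine Finset.sum_congr rfl (fun t _ => ?_)
      rw [← Finset.card_filter, Finset.filter_univ_mem]
    calc (∑ i, (l i - (d i - s)))
        ≤ ∑ i, ((Finset.Icc 1 s).filter (fun t => i ∈ T t)).card :=
          Finset.sum_le_sum (fun i _ => hcount i s)
      _ = ∑ t ∈ Finset.Icc 1 s, (T t).card := h2
      _ ≤ ∑ _t ∈ Finset.Icc 1 s, c := Finset.sum_le_sum (fun t _ => hT t)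
      _ = (Finset.Icc 1 s).card * c := by rw [Finset.sum_const, smul_eq_mul]
      _ = c * s := by rw [Nat.card_Icc]; simp [Nat.mul_comm]
  -- the key invariant: LLF keeps the residual instance feasible
  have key : ∀ t, 1 ≤ t →
      (∀ i, remLoad l S' i t ≤ d i - (t-1)) ∧
      (∀ s, (∑ i, (remLoad l S' i t - (d i - s))) ≤ c * (s - (t-1))) := by
    intro t ht
    induction t, ht using Nat.le_induction with
    | base =>
      constructor
      · intro i
        have h0 : remLoad l S' i 1 = l i := by simp [remLoad]
        have := hld i; omega
      · intro s
        have h0 : ∀ i, remLoad l S' i 1 = l i := by intro i; simp [remLoad]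
        calc (∑ i, (remLoad l S' i 1 - (d i - s)))
            = ∑ i, (l i - (d i - s)) := Finset.sum_congr rfl (fun i _ => by rw [h0 i])
          _ ≤ c * s := hfb s
          _ = c * (s - (1-1)) := by norm_num
    | succ t ht IH =>
      obtain ⟨ha, hb⟩ := IH
      obtain ⟨hcard, hpos, hlax⟩ := hS' t ht
      have hrec : ∀ i, remLoad l S' i (t+1)
          = remLoad l S' i t - (if i ∈ S' t then 1 else 0) :=
        fun i => remLoad_succ l S' i t ht
      -- if an incomplete flow is unserved, all channels are busy
      have hfull : ∀ j, j ∉ S' t → 0 < remLoad l S' j t → (S' t).card = c := by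
        intro j hjS hjR
        have hsub : S' t ⊆ Finset.univ.filter (fun i => 0 < remLoad l S' i t) := by
          intro k hk; simp [hpos k hk]
        have hlt : (S' t).card
            < (Finset.univ.filter (fun i => 0 < remLoad l S' i t)).card := by
          apply Finset.card_lt_card
          refine ⟨hsub, fun hsub2 => hjS (hsub2 ?_)⟩
          simp [hjR]
        rcases le_total c ((Finset.univ.filter (fun i => 0 < remLoad l S' i t)).card)
          with h | h
        · rw [min_eq_left h] at hcard; exact hcard
        · rw [min_eq_right h] at hcard; omega
      -- part (a) at t+1
      have ha' : ∀ i, remLoad l S' i (t+1) ≤ d i - t := by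
        intro i
        by_cases hi : i ∈ S' t
        · have h1 := hpos i hi
          have h2 := ha i
          rw [hrec i]; simp only [hi, if_true]
          omega
        · rw [hrec i]; simp only [hi, if_false]
          by_cases hR : 0 < remLoad l S' i t
          · by_contra hcon
            push_neg at hcon
            have hai := ha i
            have hdi : t ≤ d i := by omega
            have hRi : remLoad l S' i t = d i - (t-1) := by omega
            have hU : ∀ k ∈ S' t,
                0 < remLoad l S' k t ∧ remLoad l S' k t = d k - (t-1) := by
              intro k hk
              refine ⟨hpos k hk, ?_⟩
              have hl := hlax k hk i hR hi
              have hak := ha k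
              have hpk := hpos k hk
              unfold laxity at hl
              omega
            set U : Finset (Fin n) := Finset.univ.filter
                (fun j => 0 < remLoad l S' j t ∧ remLoad l S' j t = d j - (t-1))
              with hUdef
            have hiU : i ∈ U := by
              simp only [hUdef, Finset.mem_filter, Finset.mem_univ, true_and]
              exact ⟨hR, hRi⟩
            have hSU : S' t ⊆ U := by
              intro k hk
              simp only [hUdef, Finset.mem_filter, Finset.mem_univ, true_and]
              exact hU k hk
            have hUcard : c + 1 ≤ U.card := by
              have h1 : (insert i (S' t)).card = c + 1 := by
                rw [Finset.card_insert_of_notMem hi, hfull i hi hR]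
              have h2 : insert i (S' t) ⊆ U := by
                intro x hx
                rcases Finset.mem_insert.mp hx with h | h
                · exact h ▸ hiU
                · exact hSU h
              have := Finset.card_le_card h2
              omega
            obtain ⟨j0, hj0U, hj0⟩ := U.exists_min_image d ⟨i, hiU⟩
            have hj0' := (Finset.mem_filter.mp hj0U).2
            have hts0 : t ≤ d j0 := by omega
            have hterm : ∀ j ∈ U,
                remLoad l S' j t - (d j - d j0) = d j0 - (t-1) := by
              intro j hj
              have hj' := (Finset.mem_filter.mp hj).2
              have hm := hj0 j hj
              omega
            have hlb : U.card * (d j0 - (t-1))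
                ≤ ∑ i', (remLoad l S' i' t - (d i' - d j0)) := by
              calc U.card * (d j0 - (t-1)) = ∑ _j ∈ U, (d j0 - (t-1)) := by
                    rw [Finset.sum_const, smul_eq_mul]
                _ = ∑ j ∈ U, (remLoad l S' j t - (d j - d j0)) :=
                    (Finset.sum_congr rfl hterm).symm
                _ ≤ _ := Finset.sum_le_sum_of_subset (Finset.subset_univ U)
            have hub := hb (d j0)
            have hchain : (c+1) * (d j0 - (t-1)) ≤ c * (d j0 - (t-1)) :=
              le_trans (Nat.mul_le_mul_right _ hUcard) (le_trans hlb hub)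
            have hmul : (c+1) * (d j0 - (t-1)) = c * (d j0 - (t-1)) + (d j0 - (t-1)) := by
              ring
            omega
          · omega
      refine ⟨fun i => by have := ha' i; simpa using this, ?_⟩
      -- part (b) at t+1
      intro s
      have hgoal : (∑ i', (remLoad l S' i' (t+1) - (d i' - s))) ≤ c * (s - t) := by
        by_cases hst : s < t
        · have hz : ∀ i', remLoad l S' i' (t+1) - (d i' - s) = 0 := by
            intro i'; have := ha' i'; omega
          calc (∑ i', (remLoad l S' i' (t+1) - (d i' - s)))
              = ∑ _i' : Fin n, 0 := Finset.sum_congr rfl (fun i' _ => hz i')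
            _ = 0 := Finset.sum_const_zero
            _ ≤ c * (s - t) := Nat.zero_le _
        · push_neg at hst
          have hFle : ∀ k, remLoad l S' k (t+1) - (d k - s) ≤ s - t := by
            intro k; have := ha' k; omega
          by_cases hz : ∀ j, j ∉ S' t → remLoad l S' j (t+1) - (d j - s) = 0
          · have h1 : (∑ i', (remLoad l S' i' (t+1) - (d i' - s)))
                = ∑ k ∈ S' t, (remLoad l S' k (t+1) - (d k - s)) :=
              (Finset.sum_subset (Finset.subset_univ _) (fun x _ hx => hz x hx)).symm
            have h2 : (S' t).card ≤ c := hcard.le.trans (Nat.min_le_left _ _)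
            calc (∑ i', (remLoad l S' i' (t+1) - (d i' - s)))
                = ∑ k ∈ S' t, (remLoad l S' k (t+1) - (d k - s)) := h1
              _ ≤ ∑ _k ∈ S' t, (s - t) := Finset.sum_le_sum (fun k _ => hFle k)
              _ = (S' t).card * (s - t) := by rw [Finset.sum_const, smul_eq_mul]
              _ ≤ c * (s - t) := Nat.mul_le_mul_right _ h2
          · push_neg at hz
            obtain ⟨j, hjS, hjF⟩ := hz
            have hrj := hrec j
            simp only [hjS, if_false] at hrj
            have hRj : 0 < remLoad l S' j t := by omega
            have hcardc := hfull j hjS hRj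
            have hallpos : ∀ k ∈ S' t, d k - s < remLoad l S' k t := by
              intro k hk
              by_contra hcon
              push_neg at hcon
              have hl := hlax k hk j hRj hjS
              unfold laxity at hl
              have hpk := hpos k hk
              have haj := ha j
              omega
            have hcnt : (∑ i' : Fin n, (if i' ∈ S' t then 1 else 0)) = (S' t).card := by
              rw [← Finset.card_filter, Finset.filter_univ_mem]
            have hsplit : (∑ i', (remLoad l S' i' t - (d i' - s)))
                = (∑ i', (remLoad l S' i' (t+1) - (d i' - s))) + (S' t).card := by
              have e1 : ∀ k : Fin n, remLoad l S' k t - (d k - s)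
                  = (remLoad l S' k (t+1) - (d k - s)) + (if k ∈ S' t then 1 else 0) := by
                intro k
                have h1 := hrec k
                by_cases h : k ∈ S' t
                · simp only [h, if_true] at h1 ⊢
                  have := hallpos k h
                  omega
                · simp only [h, if_false] at h1 ⊢
                  omega
              rw [Finset.sum_congr rfl (fun k _ => e1 k), Finset.sum_add_distrib, hcnt]
            have hub := hb s
            have hmul : c * (s - (t-1)) = c * (s - t) + c := by
              rw [show s - (t-1) = (s - t) + 1 by omega, Nat.mul_add, Nat.mul_one]
            omega
      simpa using hgoal
  -- conclude
  intro i
  have h := (key (d i + 1) (by omega)).1 i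
  unfold remLoad at h
  rw [Finset.Ico_add_one_right_eq_Icc] at h
  unfold Completes
  omega
end

section
/- Suppose the number of flows generated over a frame is Poisson(λT) with λ, T > 0, each generated flow contends independently with probability p ∈ [0,1], and each contending flow picks one of cN_C contention blocks uniformly at random (c, N_C ∈ ℕ positive). Then the expected number of contention blocks selected by exactly one contending flow (i.e., the expected number of successful admission requests received by the master during one contention phase) equals λTp · e^{−λTp/(cN_C)}. -/
/-!
Given `N = n`, the number of contenders in a fixed block is Binomial(`n`, `q`) with
`q = p / (c N_C)`; mixing over `N ∼ Poisson(λT)` thins the Poisson law, so each block is chosen by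
exactly `k` contenders with probability `e^{-λTq} (λTq)^k / k!`. By linearity of expectation the
expected number of singly selected blocks is `c N_C · λTq e^{-λTq} = λTp e^{-λTp/(c N_C)}`.
-/

open MeasureTheory Finset

theorem hasSum_poisson_mul_binomial (μ q : ℝ) (k : ℕ) :
    HasSum (fun n : ℕ => Real.exp (-μ) * μ ^ n / n.factorial *
      ((n.choose k : ℝ) * q ^ k * (1 - q) ^ (n - k)))
      (Real.exp (-(μ * q)) * (μ * q) ^ k / k.factorial) := by
  -- The terms with `n < k` vanish; shifted by `k`, the series is a multiple of that of
  -- `exp (μ (1 - q))`.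
  rw [← hasSum_nat_add_iff' k]
  have hlow : ∑ n ∈ range k, Real.exp (-μ) * μ ^ n / n.factorial *
      ((n.choose k : ℝ) * q ^ k * (1 - q) ^ (n - k)) = 0 :=
    sum_eq_zero fun n hn => by simp [Nat.choose_eq_zero_of_lt (mem_range.1 hn)]
  have hshift : ∀ m : ℕ, Real.exp (-μ) * μ ^ (m + k) / (m + k).factorial *
      (((m + k).choose k : ℝ) * q ^ k * (1 - q) ^ (m + k - k)) =
      Real.exp (-μ) * (μ * q) ^ k / k.factorial * ((μ * (1 - q)) ^ m / m.factorial) := by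
    intro m
    have hfac : ((m + k).choose k : ℝ) * m.factorial * k.factorial = (m + k).factorial := by
      exact_mod_cast Nat.add_choose_mul_factorial_mul_factorial m k
    have hchoose : ((m + k).choose k : ℝ) ≠ 0 :=
      Nat.cast_ne_zero.2 (Nat.choose_pos (by omega)).ne'
    rw [← hfac, Nat.add_sub_cancel, mul_pow, mul_pow, pow_add]
    field_simp
  have hexp : HasSum (fun m : ℕ => (μ * (1 - q)) ^ m / m.factorial)
      (Real.exp (μ * (1 - q))) := by
    rw [Real.exp_eq_exp_ℝ]
    exact NormedSpace.expSeries_div_hasSum_exp _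
  have hvalue : Real.exp (-(μ * q)) * (μ * q) ^ k / k.factorial =
      Real.exp (-μ) * (μ * q) ^ k / k.factorial * Real.exp (μ * (1 - q)) := by
    rw [show -(μ * q) = -μ + μ * (1 - q) by ring, Real.exp_add]
    ring
  simp only [hlow, sub_zero, hshift, hvalue]
  exact hexp.mul_left _

theorem measure_eq_tsum_measure_inter_fiber {Ω : Type*} [MeasurableSpace Ω] (P : Measure Ω)
    {N : Ω → ℕ} (hN : Measurable N) {s : Set Ω} (hs : MeasurableSet s) :
    P s = ∑' n, P ({ω | N ω = n} ∩ s) := by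
  rw [← measure_iUnion]
  · congr 1
    ext ω
    simp
  · intro m n hmn
    exact Disjoint.mono Set.inter_subset_left Set.inter_subset_left
      ((Set.disjoint_singleton.2 hmn).preimage N)
  · exact fun n => (hN (measurableSet_singleton n)).inter hs

theorem integral_card_filter_eq_sum_measureReal {Ω ι : Type*} [MeasurableSpace Ω] [Fintype ι]
    (P : Measure Ω) [IsFiniteMeasure P] (p : ι → Ω → Prop) [∀ i ω, Decidable (p i ω)]
    (hp : ∀ i, MeasurableSet {ω | p i ω}) :
    ∫ ω, (#{i | p i ω} : ℝ) ∂P = ∑ i, P.real {ω | p i ω} := by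
  have hcard : ∀ ω, (#{i | p i ω} : ℝ) = ∑ i, {ω | p i ω}.indicator 1 ω := by
    intro ω
    rw [card_filter]
    push_cast
    refine sum_congr rfl fun i _ => ?_
    by_cases h : p i ω <;> simp [h]
  simp_rw [hcard]
  rw [integral_finsetSum _ fun i _ => (integrable_const 1).indicator (hp i)]
  exact sum_congr rfl fun i _ => integral_indicator_one (hp i)

theorem measure_eq_poisson_of_binomial_thinning {Ω : Type*} [MeasurableSpace Ω] (P : Measure Ω)
    {N X : Ω → ℕ} (hN : Measurable N) (hX : Measurable X) {μ q : ℝ} (hμ : 0 ≤ μ)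
    (hq0 : 0 ≤ q) (hq1 : q ≤ 1) (k : ℕ)
    (hNpois : ∀ n : ℕ, P {ω | N ω = n} =
      ENNReal.ofReal (Real.exp (-μ) * μ ^ n / n.factorial))
    (hcond : ∀ n : ℕ, P {ω | N ω = n ∧ X ω = k} =
      P {ω | N ω = n} * ENNReal.ofReal ((n.choose k : ℝ) * q ^ k * (1 - q) ^ (n - k))) :
    P {ω | X ω = k} = ENNReal.ofReal (Real.exp (-(μ * q)) * (μ * q) ^ k / k.factorial) := by
  have hq : 0 ≤ 1 - q := sub_nonneg.2 hq1
  have hterm : ∀ n : ℕ, P ({ω | N ω = n} ∩ {ω | X ω = k}) = ENNReal.ofReal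
      (Real.exp (-μ) * μ ^ n / n.factorial *
        ((n.choose k : ℝ) * q ^ k * (1 - q) ^ (n - k))) := by
    intro n
    rw [← Set.ofPred_and, hcond, hNpois, ← ENNReal.ofReal_mul (by positivity)]
  have hsum := hasSum_poisson_mul_binomial μ q k
  rw [measure_eq_tsum_measure_inter_fiber P hN (s := {ω | X ω = k})
      (hX (measurableSet_singleton k)), ← hsum.tsum_eq,
    ENNReal.ofReal_tsum_of_nonneg (fun n => by positivity) hsum.summable]
  exact tsum_congr hterm

/-- **Expected number of successful admission requests per contention phase.**
The number `N` of flows generated over a frame is Poisson(`λT`); each flow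
contends independently with probability `p` and, if it contends, picks one of
the `c·N_C` contention blocks uniformly at random.  Hence, for each block `j`,
given `N = n` the number `B j` of contenders selecting block `j` is
Binomial(`n`, `p · 1/(c·N_C)`).  Then the expected number of blocks selected by
exactly one contending flow (successful admission requests) equals
`λTp · e^{−λTp/(c·N_C)}`. -/
theorem expected_successful_requests {Ω : Type*} [MeasurableSpace Ω]
    (P : Measure Ω) [IsProbabilityMeasure P]
    (lam T p : ℝ) (hlam : 0 < lam) (hT : 0 < T) (hp0 : 0 ≤ p) (hp1 : p ≤ 1)
    (c NC : ℕ) (hc : 0 < c) (hNC : 0 < NC)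
    (N : Ω → ℕ) (B : Fin (c * NC) → Ω → ℕ)
    (hN : Measurable N) (hB : ∀ j, Measurable (B j))
    (hNpois : ∀ n : ℕ,
      P {ω | N ω = n} =
        ENNReal.ofReal (Real.exp (-(lam * T)) * (lam * T) ^ n / n.factorial))
    (hcond : ∀ (j : Fin (c * NC)) (n k : ℕ),
      P {ω | N ω = n ∧ B j ω = k} =
        P {ω | N ω = n} *
          ENNReal.ofReal ((n.choose k : ℝ) * (p * (1 / ((c : ℝ) * NC))) ^ k *
            (1 - p * (1 / ((c : ℝ) * NC))) ^ (n - k))) :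
    ∫ ω, ((Finset.univ.filter (fun j : Fin (c * NC) => B j ω = 1)).card : ℝ) ∂P =
      lam * T * p * Real.exp (-(lam * T * p / ((c : ℝ) * NC))) := by
  have hblocks : (1 : ℝ) ≤ (c : ℝ) * NC := by
    exact_mod_cast Nat.one_le_iff_ne_zero.2 (Nat.mul_pos hc hNC).ne'
  have hq1 : p * (1 / ((c : ℝ) * NC)) ≤ 1 := by
    rw [mul_one_div, div_le_one (by linarith)]
    linarith
  have hsuccess : ∀ j, P.real {ω | B j ω = 1} = lam * T * p / ((c : ℝ) * NC) *
      Real.exp (-(lam * T * p / ((c : ℝ) * NC))) := by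
    intro j
    rw [measureReal_def, measure_eq_poisson_of_binomial_thinning P hN (hB j)
      (by positivity) (by positivity) hq1 1 hNpois (hcond j · 1),
      ENNReal.toReal_ofReal (by positivity), pow_one, Nat.factorial_one, Nat.cast_one, div_one]
    field_simp
  rw [integral_card_filter_eq_sum_measureReal P (fun j ω => B j ω = 1)
    fun j => (hB j (measurableSet_singleton 1) :)]
  simp only [hsuccess, sum_const, card_univ, Fintype.card_fin, nsmul_eq_mul]
  push_cast
  field_simp
end
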